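/- arXiv:2108.08299 — 3 statements merged into one kernel-verified Lean document; each statement's English description precedes it below -/
import Mathlib

section
/- The shortest Dyck path containing a pair of consecutive valleys whose levels differ by less than d (for d < 0, with e = |d|) is the path U^{e+2} D U D^{e+2} U D, which has semi-length e + 4. Consequently, every Dyck path of semi-length at most e + 3 is a d-Dyck path. -/
/-- Value of a step: `true` = up-step U, `false` = down-step D. -/
def stepVal (b : Bool) : ℤ := if b then 1 else -1

/-- Heights (y-coordinates) of all lattice points visited along the path,
starting at 0. -/
def heights (p : List Bool) : List ℤ := p.scanl (fun h b => h + stepVal b) 0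

/-- A Dyck path: equal numbers of up and down steps, never going below the x-axis. -/
def IsDyck (p : List Bool) : Prop :=
  p.count true = p.count false ∧ ∀ h ∈ heights p, 0 ≤ h

/-- Semi-length of a path: the number of up-steps. -/
def semilength (p : List Bool) : ℕ := p.count true

/-- Levels (y-coordinates of the local minima) of the valleys (DU factors),
read from left to right. -/
def valleyLevels (p : List Bool) : List ℤ :=
  ((p.zip p.tail).zip (heights p).tail).filterMap
    (fun x => if x.1.1 = false ∧ x.1.2 = true then some x.2 else none)

/-- A path is restricted `d`-Dyck (on the valley condition) if consecutive
valley levels `ν_i, ν_{i+1}` satisfy `ν_{i+1} - ν_i ≥ d`. -/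
def RestrictedD (d : ℤ) (p : List Bool) : Prop :=
  List.Chain' (fun a b => d ≤ b - a) (valleyLevels p)

/-- Number of peaks (UD factors) of a path. -/
def peaks (p : List Bool) : ℕ := (p.zip p.tail).countP (fun x => x.1 && !x.2)

/-- The area of a path: the sum of the y-coordinates of all lattice points on it. -/
def pathArea (p : List Bool) : ℤ := (heights p).sum

/-- `dDyckCount d n` = number of `d`-Dyck paths of semi-length `n`. -/
noncomputable def dDyckCount (d : ℤ) (n : ℕ) : ℕ :=
  {p : List Bool | IsDyck p ∧ semilength p = n ∧ RestrictedD d p}.ncard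

/-! Take two consecutive valleys with levels `a`, `b` and `b - a < d`, and write the path as
`A · DU · B · DU · C`. The net height of `B` is `b - a < d`, so `B` has at least `1 - d`
down-steps; the two valleys contribute two more, and `C` descends from level `b + 1 ≥ 1` to `0`,
so it has at least one. Hence a Dyck path violating the restriction has at least
`4 - d = e + 4` down-steps, and `U^{e+2} D U D^{e+2} U D`, with valleys at levels `e + 1` and `0`,
attains the bound. -/

@[simp]
lemma stepVal_true : stepVal true = 1 := rfl

@[simp]
lemma stepVal_false : stepVal false = -1 := rfl

def height (l : List Bool) : ℤ := l.count true - l.count false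

def heightsFrom (c : ℤ) (p : List Bool) : List ℤ := p.scanl (fun h b => h + stepVal b) c

def valleysFrom (c : ℤ) (p : List Bool) : List ℤ :=
  ((p.zip p.tail).zip (heightsFrom c p).tail).filterMap
    (fun x => if x.1.1 = false ∧ x.1.2 = true then some x.2 else none)

lemma heights_eq_heightsFrom (p : List Bool) : heights p = heightsFrom 0 p := rfl

lemma valleyLevels_eq_valleysFrom (p : List Bool) : valleyLevels p = valleysFrom 0 p := rfl

@[simp]
lemma height_nil : height [] = 0 := by simp [height]

@[simp]
lemma height_cons (x : Bool) (l : List Bool) : height (x :: l) = stepVal x + height l := by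
  cases x <;> simp [height] <;> ring

@[simp]
lemma height_append (l₁ l₂ : List Bool) :
    height (l₁ ++ l₂) = height l₁ + height l₂ := by
  simp only [height, List.count_append, Nat.cast_add]
  ring

lemma neg_count_false_le_height (l : List Bool) : -(l.count false : ℤ) ≤ height l := by
  simp [height]

lemma semilength_eq_count_false {p : List Bool} (hp : IsDyck p) : semilength p = p.count false :=
  hp.1

lemma height_eq_zero_of_isDyck {p : List Bool} (hp : IsDyck p) : height p = 0 := by
  rw [height, hp.1, sub_self]

lemma heightsFrom_nil (c : ℤ) : heightsFrom c [] = [c] := rfl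

lemma heightsFrom_cons (c : ℤ) (x : Bool) (l : List Bool) :
    heightsFrom c (x :: l) = c :: heightsFrom (c + stepVal x) l :=
  List.scanl_cons

lemma add_height_mem_heightsFrom (c : ℤ) (l₁ l₂ : List Bool) :
    c + height l₁ ∈ heightsFrom c (l₁ ++ l₂) := by
  induction l₁ generalizing c with
  | nil => cases l₂ <;> simp [heightsFrom]
  | cons x l₁ ih =>
    rw [List.cons_append, heightsFrom_cons, height_cons, ← add_assoc]
    exact List.mem_cons_of_mem _ (ih _)

lemma nonneg_of_mem_heightsFrom_replicate_append {c : ℤ} {n : ℕ} {b : Bool} {l : List Bool}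
    (hc : 0 ≤ c) (hcn : 0 ≤ c + n * stepVal b)
    (hl : ∀ h ∈ heightsFrom (c + n * stepVal b) l, 0 ≤ h) :
    ∀ h ∈ heightsFrom c (List.replicate n b ++ l), 0 ≤ h := by
  induction n generalizing c with
  | zero => simpa using hl
  | succ n ih =>
    have hstep : 0 ≤ c + stepVal b := by cases b <;> simp at hcn ⊢ <;> linarith
    have hshift : c + stepVal b + n * stepVal b = c + ↑(n + 1) * stepVal b := by
      push_cast; ring
    rw [List.replicate_succ, List.cons_append, heightsFrom_cons]
    exact List.forall_mem_cons.2 ⟨hc, ih hstep (hshift ▸ hcn) (hshift ▸ hl)⟩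

lemma valleysFrom_cons_cons (c : ℤ) (x y : Bool) (l : List Bool) :
    valleysFrom c (x :: y :: l) =
      (if x = false ∧ y = true then [c + stepVal x] else []) ++
        valleysFrom (c + stepVal x) (y :: l) := by
  by_cases h : x = false ∧ y = true <;>
    simp [valleysFrom, heightsFrom, List.zip_cons_cons, List.scanl_cons, h]

lemma valleysFrom_true_cons (c : ℤ) (l : List Bool) :
    valleysFrom c (true :: l) = valleysFrom (c + 1) l := by
  cases l with
  | nil => rfl
  | cons y l => simp [valleysFrom_cons_cons]

lemma valleysFrom_false_false_cons (c : ℤ) (l : List Bool) :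
    valleysFrom c (false :: false :: l) = valleysFrom (c - 1) (false :: l) := by
  simp [valleysFrom_cons_cons, sub_eq_add_neg]

lemma valleysFrom_false_true_cons (c : ℤ) (l : List Bool) :
    valleysFrom c (false :: true :: l) = (c - 1) :: valleysFrom c l := by
  simp [valleysFrom_cons_cons, valleysFrom_true_cons, sub_eq_add_neg]

lemma valleysFrom_replicate_true_append (c : ℤ) (n : ℕ) (l : List Bool) :
    valleysFrom c (List.replicate n true ++ l) = valleysFrom (c + n) l := by
  induction n generalizing c with
  | zero => simp
  | succ n ih =>
    rw [List.replicate_succ, List.cons_append, valleysFrom_true_cons, ih]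
    push_cast; ring_nf

lemma valleysFrom_replicate_false_append (c : ℤ) (n : ℕ) (l : List Bool) :
    valleysFrom c (List.replicate n false ++ false :: l) = valleysFrom (c - n) (false :: l) := by
  induction n generalizing c l with
  | zero => simp
  | succ n ih =>
    rw [List.replicate_succ', List.append_assoc, List.singleton_append, ih,
      valleysFrom_false_false_cons]
    push_cast; ring_nf

lemma exists_eq_append_of_mem_valleysFrom {a : ℤ} :
    ∀ {c : ℤ} {p : List Bool}, a ∈ valleysFrom c p →
      ∃ A B, p = A ++ false :: true :: B ∧ a = c + height A - 1
  | _, [], h => by simp [valleysFrom] at h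
  | _, [_], h => by simp [valleysFrom] at h
  | c, true :: l, h => by
    rw [valleysFrom_true_cons] at h
    obtain ⟨A, B, rfl, rfl⟩ := exists_eq_append_of_mem_valleysFrom h
    exact ⟨true :: A, B, rfl, by rw [height_cons, stepVal_true]; ring⟩
  | c, false :: false :: l, h => by
    rw [valleysFrom_false_false_cons] at h
    obtain ⟨A, B, hl, rfl⟩ := exists_eq_append_of_mem_valleysFrom h
    exact ⟨false :: A, B, by rw [hl]; rfl, by rw [height_cons, stepVal_false]; ring⟩
  | c, false :: true :: l, h => by
    rw [valleysFrom_false_true_cons, List.mem_cons] at h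
    rcases h with rfl | h
    · exact ⟨[], l, rfl, by simp⟩
    · obtain ⟨A, B, rfl, rfl⟩ := exists_eq_append_of_mem_valleysFrom h
      exact ⟨false :: true :: A, B, rfl, by simp⟩

lemma exists_eq_append_of_sublist_valleysFrom {a b : ℤ} :
    ∀ {c : ℤ} {p : List Bool}, [a, b].Sublist (valleysFrom c p) →
      ∃ A B C, p = A ++ false :: true :: (B ++ false :: true :: C) ∧
        a = c + height A - 1 ∧ b = a + height B
  | _, [], h => by simp [valleysFrom] at h
  | _, [_], h => by simp [valleysFrom] at h
  | c, true :: l, h => by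
    rw [valleysFrom_true_cons] at h
    obtain ⟨A, B, C, rfl, rfl, rfl⟩ := exists_eq_append_of_sublist_valleysFrom h
    exact ⟨true :: A, B, C, rfl, by rw [height_cons, stepVal_true]; ring, rfl⟩
  | c, false :: false :: l, h => by
    rw [valleysFrom_false_false_cons] at h
    obtain ⟨A, B, C, hl, rfl, rfl⟩ := exists_eq_append_of_sublist_valleysFrom h
    exact ⟨false :: A, B, C, by rw [hl]; rfl, by rw [height_cons, stepVal_false]; ring, rfl⟩
  | c, false :: true :: l, h => by
    rw [valleysFrom_false_true_cons, List.sublist_cons_iff] at h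
    rcases h with h | ⟨_, ⟨rfl, rfl⟩, h⟩
    · obtain ⟨A, B, C, rfl, rfl, rfl⟩ := exists_eq_append_of_sublist_valleysFrom h
      exact ⟨false :: true :: A, B, C, rfl, by simp, rfl⟩
    · obtain ⟨B, C, rfl, rfl⟩ :=
        exists_eq_append_of_mem_valleysFrom (List.singleton_sublist.1 h)
      exact ⟨[], B, C, rfl, by simp, by ring⟩

lemma exists_sublist_valleyLevels_of_not_restrictedD {d : ℤ} {p : List Bool}
    (h : ¬ RestrictedD d p) : ∃ a b, [a, b].Sublist (valleyLevels p) ∧ b - a < d := by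
  have := List.isChain_iff_forall_rel_of_append_cons_cons.not.mp h
  push Not at this
  obtain ⟨a, b, l₁, l₂, hl, hab⟩ := this
  exact ⟨a, b, hl ▸ by simp, hab⟩

theorem four_sub_le_semilength_of_not_restrictedD {d : ℤ} {p : List Bool} (hp : IsDyck p)
    (hr : ¬ RestrictedD d p) : 4 - d ≤ semilength p := by
  obtain ⟨a, b, hsub, hab⟩ := exists_sublist_valleyLevels_of_not_restrictedD hr
  obtain ⟨A, B, C, rfl, rfl, rfl⟩ := exists_eq_append_of_sublist_valleysFrom hsub
  have hb : 0 ≤ 0 + height (A ++ false :: true :: B ++ [false]) := by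
    refine hp.2 _ ?_
    simpa [heights_eq_heightsFrom] using
      add_height_mem_heightsFrom 0 (A ++ false :: true :: B ++ [false]) (true :: C)
  have hp0 := height_eq_zero_of_isDyck hp
  have hlen : (semilength (A ++ false :: true :: (B ++ false :: true :: C)) : ℤ) =
      A.count false + B.count false + C.count false + 2 := by
    rw [semilength_eq_count_false hp]
    simp only [List.count_append, List.count_cons_self, ne_eq, Bool.true_eq_false,
      not_false_eq_true, List.count_cons_of_ne, Nat.cast_add, Nat.cast_one]
    ring
  simp only [height_append, height_cons, height_nil, stepVal_true, stepVal_false] at hb hab hp0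
  linarith [neg_count_false_le_height B, neg_count_false_le_height C]

def shortestNonDDyckPath (e : ℕ) : List Bool :=
  List.replicate (e + 2) true ++ [false, true] ++ List.replicate (e + 2) false ++ [true, false]

lemma shortestNonDDyckPath_eq (e : ℕ) : shortestNonDDyckPath e =
    List.replicate (e + 2) true ++ false :: true ::
      (List.replicate (e + 1) false ++ false :: true :: [false]) := by
  simp [shortestNonDDyckPath, List.replicate_succ']

lemma semilength_shortestNonDDyckPath (e : ℕ) : semilength (shortestNonDDyckPath e) = e + 4 := by
  simp [semilength, shortestNonDDyckPath, List.count_replicate]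

lemma isDyck_shortestNonDDyckPath (e : ℕ) : IsDyck (shortestNonDDyckPath e) := by
  refine ⟨by simp [shortestNonDDyckPath, List.count_replicate], ?_⟩
  rw [heights_eq_heightsFrom, shortestNonDDyckPath_eq]
  refine nonneg_of_mem_heightsFrom_replicate_append le_rfl (by rw [stepVal_true]; omega) ?_
  simp only [heightsFrom_cons, List.forall_mem_cons, stepVal_true, stepVal_false]
  refine ⟨by omega, by omega,
    nonneg_of_mem_heightsFrom_replicate_append (by omega) (by rw [stepVal_false]; omega) ?_⟩
  simp only [heightsFrom_cons, heightsFrom_nil, List.forall_mem_cons, stepVal_true, stepVal_false]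
  refine ⟨?_, ?_, ?_, ?_, List.forall_mem_nil _⟩ <;> omega

lemma valleyLevels_shortestNonDDyckPath (e : ℕ) :
    valleyLevels (shortestNonDDyckPath e) = [(e : ℤ) + 1, 0] := by
  rw [valleyLevels_eq_valleysFrom, shortestNonDDyckPath_eq, valleysFrom_replicate_true_append,
    valleysFrom_false_true_cons, valleysFrom_replicate_false_append, valleysFrom_false_true_cons]
  change [_, _ - 1] = _
  push_cast
  ring_nf

lemma restrictedD_shortestNonDDyckPath_iff {d : ℤ} {e : ℕ} :
    RestrictedD d (shortestNonDDyckPath e) ↔ d ≤ -(e : ℤ) - 1 := by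
  change List.IsChain _ _ ↔ _
  rw [valleyLevels_shortestNonDDyckPath, List.isChain_pair]
  constructor <;> intro h <;> linarith

/-- The shortest Dyck path violating the `d`-restriction (`d < 0`, `e = |d|`)
is `U^{e+2} D U D^{e+2} U D`, of semi-length `e + 4`; consequently every Dyck
path of semi-length at most `e + 3` is a `d`-Dyck path. -/
theorem shortest_non_dDyck (d : ℤ) (hd : d < 0) (e : ℕ) (he : (e : ℤ) = |d|) :
    (IsDyck (List.replicate (e + 2) true ++ [false, true] ++
        List.replicate (e + 2) false ++ [true, false]) ∧
      semilength (List.replicate (e + 2) true ++ [false, true] ++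
        List.replicate (e + 2) false ++ [true, false]) = e + 4 ∧
      ¬ RestrictedD d (List.replicate (e + 2) true ++ [false, true] ++
        List.replicate (e + 2) false ++ [true, false])) ∧
    (∀ p : List Bool, IsDyck p → ¬ RestrictedD d p → e + 4 ≤ semilength p) ∧
    (∀ p : List Bool, IsDyck p → semilength p ≤ e + 3 → RestrictedD d p) := by
  have hde : d = -e := by rw [he, abs_of_neg hd, neg_neg]
  have hbound (p : List Bool) (hp : IsDyck p) (hr : ¬ RestrictedD d p) :
      e + 4 ≤ semilength p := by
    have := four_sub_le_semilength_of_not_restrictedD hp hr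
    omega
  refine ⟨⟨isDyck_shortestNonDDyckPath e, semilength_shortestNonDDyckPath e, ?_⟩,
    hbound, ?_⟩
  · rw [← shortestNonDDyckPath, restrictedD_shortestNonDDyckPath_iff]
    omega
  · intro p hp hlen
    by_contra hr
    have := hbound p hp hr
    omega
end

section
/- For d ≥ 0, the number of d-Dyck paths of semi-length n having exactly k peaks equals binom(n + k − d(k−2) − 2, 2(k−1)). -/
/-- `peakCount d n k` = number of `d`-Dyck paths of semi-length `n` with exactly `k` peaks. -/
noncomputable def peakCount (d : ℤ) (n k : ℕ) : ℕ :=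
  {p : List Bool | IsDyck p ∧ semilength p = n ∧ RestrictedD d p ∧ peaks p = k}.ncard

/-!
A Dyck path with `k ≥ 1` peaks factors uniquely as `U^a₁ D^b₁ ⋯ U^a_k D^b_k` with all
`aᵢ, bᵢ ≥ 1`, and its valleys lie at the levels `νᵢ = ∑_{j ≤ i} (aⱼ - bⱼ)`, `i < k`. Since
`d ≥ 0`, the conditions `ν₁ ≥ 0` and `νᵢ₊₁ ≥ νᵢ + d` already keep the path above the axis, so a
`d`-Dyck path with `k` peaks amounts to a free choice of the `2k - 1` natural numbers `ν₁`,
`νᵢ₊₁ - νᵢ - d` (`i ≤ k - 2`), `bᵢ - 1` (`i ≤ k - 1`) and `a_k - 1`, the last descent being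
`b_k = a_k + ν_{k-1}`. These numbers add up to `n - k - d(k - 2)`, and stars and bars counts them.
-/

open List

theorem ncard_setOf_length_sum (L m : ℕ) :
    {ws : List ℕ | ws.length = L ∧ ws.sum = m}.ncard = (L + m - 1).choose m := by
  have himage : {ws : List ℕ | ws.length = L ∧ ws.sum = m} =
      ofFn '' {P : Fin L → ℕ | ∑ i, P i = m} := by
    ext ws
    constructor
    · rintro ⟨rfl, rfl⟩
      exact ⟨fun i => ws[i], by simp [← sum_ofFn], ofFn_getElem⟩
    · rintro ⟨P, hP, rfl⟩
      simpa [sum_ofFn] using hP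
  rw [himage, Set.ncard_image_of_injective _ ofFn_injective, ← Nat.card_coe_set_eq]
  calc Nat.card {P : Fin L → ℕ // ∑ i, P i = m}
      = Nat.card (Sym (Fin L) m) := Nat.card_congr (Sym.equivNatSumOfFintype (Fin L) m).symm
    _ = (L + m - 1).choose m := by rw [Sym.natCard_sym_eq_choose, Nat.card_fin]

theorem ncard_setOf_length_succ_sum_add (L c n : ℕ) (h : c ≤ n ∨ 0 < L) :
    {ws : List ℕ | ws.length = L + 1 ∧ ws.sum + c = n}.ncard = (n + L - c).choose L := by
  by_cases hc : c ≤ n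
  · have hset : {ws : List ℕ | ws.length = L + 1 ∧ ws.sum + c = n} =
        {ws : List ℕ | ws.length = L + 1 ∧ ws.sum = n - c} := by
      ext ws
      simp only [Set.mem_ofPred_eq]
      omega
    rw [hset, ncard_setOf_length_sum, show L + 1 + (n - c) - 1 = n - c + L by omega,
      Nat.choose_symm_add, show n - c + L = n + L - c by omega]
  · have hset : {ws : List ℕ | ws.length = L + 1 ∧ ws.sum + c = n} = ∅ := by
      ext ws
      simp only [Set.mem_ofPred_eq, Set.mem_empty_iff_false, iff_false]
      omega
    rw [hset, Set.ncard_empty, Nat.choose_eq_zero_of_lt (by omega)]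

theorem List.replicate_append_inj {α : Type*} {x : α} {a a' : ℕ} {s s' : List α}
    (hs : s.head? ≠ some x) (hs' : s'.head? ≠ some x)
    (h : replicate a x ++ s = replicate a' x ++ s') : a = a' ∧ s = s' := by
  induction a generalizing a' with
  | zero =>
    cases a' with
    | zero => simpa using h
    | succ a' =>
      simp only [replicate_succ, replicate_zero, cons_append, nil_append] at h
      simp [h] at hs
  | succ a ih =>
    cases a' with
    | zero =>
      simp only [replicate_succ, replicate_zero, cons_append, nil_append] at h
      simp [← h] at hs'
    | succ a' => simpa using ih (by simpa [replicate_succ] using h)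

namespace DyckPath

def heightsFrom (h : ℤ) (p : List Bool) : List ℤ := p.scanl (fun h b => h + stepVal b) h

def StaysNonneg (h : ℤ) (p : List Bool) : Prop := ∀ x ∈ heightsFrom h p, 0 ≤ x

def valleyLevelsFrom (h : ℤ) (p : List Bool) : List ℤ :=
  ((p.zip p.tail).zip (heightsFrom h p).tail).filterMap
    (fun x => if x.1.1 = false ∧ x.1.2 = true then some x.2 else none)

def displacement (p : List Bool) : ℤ := (p.map stepVal).sum

section Steps

variable (h : ℤ) (b : Bool) (p q : List Bool)

theorem staysNonneg_nil : StaysNonneg h [] ↔ 0 ≤ h := by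
  simp [StaysNonneg, heightsFrom]

theorem staysNonneg_cons : StaysNonneg h (b :: p) ↔ 0 ≤ h ∧ StaysNonneg (h + stepVal b) p := by
  simp [StaysNonneg, heightsFrom, scanl_cons]

theorem StaysNonneg.nonneg {h : ℤ} {p : List Bool} (hp : StaysNonneg h p) : 0 ≤ h := by
  cases p with
  | nil => exact (staysNonneg_nil h).1 hp
  | cons b p => exact ((staysNonneg_cons h b p).1 hp).1

theorem staysNonneg_replicate_true_append (a : ℕ) :
    StaysNonneg h (replicate a true ++ q) ↔ 0 ≤ h ∧ StaysNonneg (h + a) q := by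
  induction a generalizing h with
  | zero => simpa using fun hq => hq.nonneg
  | succ a ih =>
    rw [replicate_succ, cons_append, staysNonneg_cons, ih,
      show h + stepVal true + a = h + (a + 1 : ℕ) by simp [stepVal]; ring]
    constructor
    · rintro ⟨h0, -, hq⟩; exact ⟨h0, hq⟩
    · rintro ⟨h0, hq⟩; exact ⟨h0, by simp [stepVal]; omega, hq⟩

theorem staysNonneg_replicate_false_append (b : ℕ) :
    StaysNonneg h (replicate b false ++ q) ↔ StaysNonneg (h - b) q := by
  induction b generalizing h with
  | zero => simp
  | succ b ih =>
    rw [replicate_succ, cons_append, staysNonneg_cons, ih,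
      show h + stepVal false - b = h - (b + 1 : ℕ) by simp [stepVal]; ring]
    refine ⟨fun hq => hq.2, fun hq => ⟨?_, hq⟩⟩
    have := hq.nonneg
    omega

@[simp] theorem displacement_cons : displacement (b :: p) = stepVal b + displacement p := by
  simp [displacement]

theorem displacement_eq_count_sub_count : displacement p = p.count true - p.count false := by
  induction p with
  | nil => rfl
  | cons b p ih => cases b <;> simp [ih, stepVal] <;> ring

@[simp] theorem valleyLevelsFrom_nil : valleyLevelsFrom h [] = [] := rfl

@[simp] theorem valleyLevelsFrom_singleton : valleyLevelsFrom h [b] = [] := rfl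

theorem valleyLevelsFrom_cons_cons (x y : Bool) :
    valleyLevelsFrom h (x :: y :: p) =
      (if x = false ∧ y = true then [h + stepVal x] else []) ++
        valleyLevelsFrom (h + stepVal x) (y :: p) := by
  cases x <;> cases y <;> simp [valleyLevelsFrom, heightsFrom]

theorem valleyLevelsFrom_true_cons :
    valleyLevelsFrom h (true :: p) = valleyLevelsFrom (h + 1) p := by
  cases p with
  | nil => rfl
  | cons y p => simp [valleyLevelsFrom_cons_cons, stepVal]

theorem valleyLevelsFrom_replicate_true_append (a : ℕ) :
    valleyLevelsFrom h (replicate a true ++ q) = valleyLevelsFrom (h + a) q := by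
  induction a generalizing h with
  | zero => simp
  | succ a ih =>
    rw [replicate_succ, cons_append, valleyLevelsFrom_true_cons, ih, Nat.cast_succ, add_assoc,
      add_comm 1]

theorem valleyLevelsFrom_replicate_false (b : ℕ) :
    valleyLevelsFrom h (replicate b false) = [] := by
  induction b generalizing h with
  | zero => rfl
  | succ b ih => cases b <;> simp_all [replicate_succ, valleyLevelsFrom_cons_cons]

theorem valleyLevelsFrom_replicate_false_append_true_cons (b : ℕ) :
    valleyLevelsFrom h (replicate (b + 1) false ++ true :: q) =
      (h - (b + 1 : ℕ)) :: valleyLevelsFrom (h - (b + 1 : ℕ)) (true :: q) := by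
  induction b generalizing h with
  | zero => simp [valleyLevelsFrom_cons_cons, stepVal, sub_eq_add_neg]
  | succ b ih =>
    rw [replicate_succ, cons_append, replicate_succ, cons_append, valleyLevelsFrom_cons_cons,
      ← cons_append, ← replicate_succ, ih,
      show h + stepVal false - (b + 1 : ℕ) = h - (b + 1 + 1 : ℕ) by simp [stepVal]; ring]
    rfl

theorem peaks_cons_cons (x y : Bool) :
    peaks (x :: y :: p) = peaks (y :: p) + if x && !y then 1 else 0 := by
  simp [peaks, countP_cons]

theorem peaks_false_cons : peaks (false :: p) = peaks p := by
  cases p with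
  | nil => rfl
  | cons y p => simp [peaks_cons_cons]

theorem peaks_replicate_false_append (b : ℕ) : peaks (replicate b false ++ q) = peaks q := by
  induction b with
  | zero => rfl
  | succ b ih => rw [replicate_succ, cons_append, peaks_false_cons, ih]

theorem peaks_replicate_true_append_false_cons (a : ℕ) :
    peaks (replicate (a + 1) true ++ false :: q) = peaks q + 1 := by
  induction a with
  | zero => simp [peaks_cons_cons, peaks_false_cons]
  | succ a ih =>
    rw [replicate_succ, cons_append, replicate_succ, cons_append, peaks_cons_cons, ← cons_append,
      ← replicate_succ, ih]
    rfl

end Steps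

/-- A block `(a, b)` stands for `U^(a+1) D^(b+1)`; the shift makes every list of pairs a path
with one peak per block. -/
def ofBlocks : List (ℕ × ℕ) → List Bool
  | [] => []
  | (a, b) :: l => replicate (a + 1) true ++ (replicate (b + 1) false ++ ofBlocks l)

def blockHeights (h : ℤ) (l : List (ℕ × ℕ)) : List ℤ := l.scanl (fun v x => v + x.1 - x.2) h

def blockValleys : ℤ → List (ℕ × ℕ) → List ℤ
  | h, (a, b) :: x :: l => (h + a - b) :: blockValleys (h + a - b) (x :: l)
  | _, _ => []

section Blocks

variable (l : List (ℕ × ℕ))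

@[simp] theorem ofBlocks_nil : ofBlocks [] = [] := rfl

@[simp] theorem ofBlocks_cons (a b : ℕ) :
    ofBlocks ((a, b) :: l) = replicate (a + 1) true ++ (replicate (b + 1) false ++ ofBlocks l) :=
  rfl

@[simp] theorem blockHeights_cons (h : ℤ) (a b : ℕ) :
    blockHeights h ((a, b) :: l) = h :: blockHeights (h + a - b) l :=
  scanl_cons

theorem count_true_ofBlocks : (ofBlocks l).count true = (l.map Prod.fst).sum + l.length := by
  induction l with
  | nil => rfl
  | cons x l ih => obtain ⟨a, b⟩ := x; simp [ih, count_replicate]; omega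

theorem count_false_ofBlocks : (ofBlocks l).count false = (l.map Prod.snd).sum + l.length := by
  induction l with
  | nil => rfl
  | cons x l ih => obtain ⟨a, b⟩ := x; simp [ih, count_replicate]; omega

theorem staysNonneg_ofBlocks (h : ℤ) :
    StaysNonneg h (ofBlocks l) ↔ ∀ x ∈ blockHeights h l, 0 ≤ x := by
  induction l generalizing h with
  | nil => simp [staysNonneg_nil, blockHeights]
  | cons x l ih =>
    obtain ⟨a, b⟩ := x
    have hstep : h + (a + 1 : ℕ) - (b + 1 : ℕ) = h + a - b := by push_cast; ring
    rw [ofBlocks_cons, staysNonneg_replicate_true_append, staysNonneg_replicate_false_append,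
      hstep, ih, blockHeights_cons, forall_mem_cons]

theorem valleyLevelsFrom_ofBlocks (h : ℤ) :
    valleyLevelsFrom h (ofBlocks l) = blockValleys h l := by
  induction l generalizing h with
  | nil => rfl
  | cons x l ih =>
    obtain ⟨a, b⟩ := x
    rcases l with _ | ⟨⟨a', b'⟩, l⟩
    · simp [valleyLevelsFrom_replicate_true_append, valleyLevelsFrom_replicate_false, blockValleys]
    · obtain ⟨q, hq⟩ : ∃ q, ofBlocks ((a', b') :: l) = true :: q := ⟨_, rfl⟩
      have hstep : h + (a + 1 : ℕ) - (b + 1 : ℕ) = h + a - b := by push_cast; ring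
      rw [ofBlocks_cons _ a b, hq, valleyLevelsFrom_replicate_true_append,
        valleyLevelsFrom_replicate_false_append_true_cons, ← hq, ih, hstep]
      rfl

theorem peaks_ofBlocks : peaks (ofBlocks l) = l.length := by
  induction l with
  | nil => rfl
  | cons x l ih =>
    obtain ⟨a, b⟩ := x
    rw [ofBlocks_cons, replicate_succ (a := false), cons_append,
      peaks_replicate_true_append_false_cons, peaks_replicate_false_append, ih, length_cons]

theorem blockValleys_subset_blockHeights (h : ℤ) : blockValleys h l ⊆ blockHeights h l := by
  induction l generalizing h with
  | nil => simp [blockValleys]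
  | cons x l ih =>
    obtain ⟨a, b⟩ := x
    rcases l with _ | ⟨⟨a', b'⟩, l⟩
    · simp [blockValleys]
    · rw [blockValleys, blockHeights_cons]
      refine subset_cons_of_subset _ (cons_subset.2 ⟨?_, ih _⟩)
      simp

theorem head?_ofBlocks_ne_some_false : (ofBlocks l).head? ≠ some false := by
  rcases l with _ | ⟨⟨a, b⟩, l⟩ <;> simp [replicate_succ]

theorem ofBlocks_injective : Function.Injective ofBlocks := by
  intro l₁ l₂ h
  induction l₁ generalizing l₂ with
  | nil => rcases l₂ with _ | ⟨⟨a, b⟩, l₂⟩ <;> simp_all [replicate_succ, ofBlocks]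
  | cons x l₁ ih =>
    obtain ⟨a, b⟩ := x
    rcases l₂ with _ | ⟨⟨a', b'⟩, l₂⟩
    · simp [replicate_succ, ofBlocks] at h
    · rw [ofBlocks_cons, ofBlocks_cons] at h
      obtain ⟨ha, h⟩ := replicate_append_inj (by simp [replicate_succ]) (by simp [replicate_succ]) h
      obtain ⟨hb, h⟩ := replicate_append_inj (head?_ofBlocks_ne_some_false l₁)
        (head?_ofBlocks_ne_some_false l₂) h
      rw [Nat.succ_inj.1 ha, Nat.succ_inj.1 hb, ih h]

end Blocks

theorem exists_eq_replicate_false_append_ofBlocks (h : ℤ) (p : List Bool) (hp : StaysNonneg h p)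
    (hend : h + displacement p = 0) : ∃ i l, p = replicate i false ++ ofBlocks l := by
  induction p generalizing h with
  | nil => exact ⟨0, [], rfl⟩
  | cons b p ih =>
    rw [staysNonneg_cons] at hp
    rw [displacement_cons, ← add_assoc] at hend
    obtain ⟨i, l, rfl⟩ := ih _ hp.2 hend
    cases b with
    | false => exact ⟨i + 1, l, rfl⟩
    | true =>
      rcases i with _ | i
      · rcases l with _ | ⟨⟨a, b⟩, l⟩
        · simp [stepVal, displacement] at hend
          omega
        · exact ⟨0, (a + 1, b) :: l, rfl⟩
      · exact ⟨0, (0, i) :: l, rfl⟩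

theorem exists_eq_ofBlocks_of_isDyck {p : List Bool} (hp : IsDyck p) : ∃ l, p = ofBlocks l := by
  obtain ⟨hcount, hnonneg⟩ := hp
  obtain ⟨i, l, rfl⟩ := exists_eq_replicate_false_append_ofBlocks 0 p hnonneg
    (by rw [displacement_eq_count_sub_count, hcount]; ring)
  rcases i with _ | i
  · exact ⟨l, rfl⟩
  · have := ((staysNonneg_replicate_false_append 0 _ (i + 1)).1 hnonneg).nonneg
    omega

theorem isDyck_ofBlocks_iff (l : List (ℕ × ℕ)) :
    IsDyck (ofBlocks l) ↔
      (l.map Prod.fst).sum = (l.map Prod.snd).sum ∧ ∀ x ∈ blockHeights 0 l, 0 ≤ x := by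
  rw [IsDyck, count_true_ofBlocks, count_false_ofBlocks, Nat.add_right_cancel_iff]
  exact and_congr_right' (staysNonneg_ofBlocks l 0)

theorem restrictedD_ofBlocks_iff (d : ℤ) (l : List (ℕ × ℕ)) :
    RestrictedD d (ofBlocks l) ↔ IsChain (fun x y => d ≤ y - x) (blockValleys 0 l) := by
  show IsChain _ (valleyLevelsFrom 0 (ofBlocks l)) ↔ _
  rw [valleyLevelsFrom_ofBlocks]

/-- `toBlocks d c h` builds the blocks of a path that starts at height `h` and whose next valley
must lie at level at least `h + c` (`c = 0` before the first valley, `c = d` afterwards): a pair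
of parameters `e, f` gives a block whose valley lies `e` above that bound and whose descent has
length `f + 1`, and the last parameter `g` gives the final block `U^(g+1) D^(h+g+1)`. -/
def toBlocks (d : ℕ) : ℕ → ℕ → List ℕ → List (ℕ × ℕ)
  | c, h, e :: f :: r => (c + e + f, f) :: toBlocks d d (h + c + e) r
  | _, h, [g] => [(g, h + g)]
  | _, _, [] => []

section ToBlocks

variable (d : ℕ)

theorem length_toBlocks (c h : ℕ) (ws : List ℕ) (hw : Odd ws.length) :
    (toBlocks d c h ws).length = ws.length / 2 + 1 := by
  fun_induction toBlocks d c h ws with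
  | case1 c h e f r ih =>
    have hr : Odd r.length := by simpa [parity_simps] using hw
    simp [ih hr]
    omega
  | case2 => simp
  | case3 => simp at hw

theorem add_sum_fst_toBlocks (c h : ℕ) (ws : List ℕ) (hw : Odd ws.length) :
    h + ((toBlocks d c h ws).map Prod.fst).sum = ((toBlocks d c h ws).map Prod.snd).sum := by
  fun_induction toBlocks d c h ws with
  | case1 c h e f r ih =>
    have hr : Odd r.length := by simpa [parity_simps] using hw
    simp only [map_cons, sum_cons, ← ih hr]
    omega
  | case2 => simp
  | case3 => simp at hw

theorem sum_fst_toBlocks_self :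
    ∀ (h : ℕ) (ws : List ℕ), ((toBlocks d d h ws).map Prod.fst).sum = ws.sum + d * (ws.length / 2)
  | h, e :: f :: r => by
    simp only [toBlocks, map_cons, sum_cons, sum_fst_toBlocks_self _ r, length_cons,
      show (r.length + 1 + 1) / 2 = r.length / 2 + 1 by omega]
    ring
  | h, [g] => by simp [toBlocks]
  | h, [] => rfl

theorem sum_fst_toBlocks_zero (ws : List ℕ) :
    ((toBlocks d 0 0 ws).map Prod.fst).sum = ws.sum + d * (ws.length / 2 - 1) := by
  match ws with
  | e :: f :: r =>
    simp only [toBlocks, Nat.zero_add, map_cons, sum_cons, sum_fst_toBlocks_self, length_cons,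
      show (r.length + 1 + 1) / 2 - 1 = r.length / 2 by omega]
    ring
  | [g] => simp [toBlocks]
  | [] => simp [toBlocks]

theorem forall_blockHeights_toBlocks_nonneg (c h : ℕ) (ws : List ℕ) :
    ∀ x ∈ blockHeights h (toBlocks d c h ws), 0 ≤ x := by
  fun_induction toBlocks d c h ws with
  | case1 c h e f r ih =>
    have hvalley : (h : ℤ) + (c + e + f : ℕ) - f = (h + c + e : ℕ) := by push_cast; ring
    rw [blockHeights_cons, forall_mem_cons, hvalley]
    exact ⟨by positivity, ih⟩
  | case2 => simp [blockHeights]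
  | case3 => simp [blockHeights]

/-- `h + c - d` acts as a virtual previous valley: the `d`-condition against it says that the
next valley lies at level at least `h + c`. -/
theorem isChain_blockValleys_toBlocks (c h : ℕ) (ws : List ℕ) :
    IsChain (fun x y => (d : ℤ) ≤ y - x)
      ((h + c - d : ℤ) :: blockValleys h (toBlocks d c h ws)) := by
  fun_induction toBlocks d c h ws with
  | case1 c h e f r ih =>
    rcases hr : toBlocks d d (h + c + e) r with _ | ⟨x, l⟩
    · exact isChain_singleton _
    · have hvalley : (h : ℤ) + (c + e + f : ℕ) - f = (h + c + e : ℕ) := by push_cast; ring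
      rw [hr] at ih
      rw [blockValleys, hvalley, isChain_cons_cons]
      exact ⟨by push_cast; omega, by simpa using ih⟩
  | case2 => exact isChain_singleton _
  | case3 => exact isChain_singleton _

theorem toBlocks_inj : ∀ {c h : ℕ} {w₁ w₂ : List ℕ}, w₁.length = w₂.length →
    toBlocks d c h w₁ = toBlocks d c h w₂ → w₁ = w₂
  | _, _, e :: f :: r, e' :: f' :: r', hlen, heq => by
    simp only [toBlocks, cons.injEq, Prod.mk.injEq] at heq
    obtain ⟨⟨hef, rfl⟩, hr⟩ := heq
    obtain rfl : e = e' := by omega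
    rw [toBlocks_inj (by simpa using hlen) hr]
  | _, _, [g], [g'], _, heq => by simpa [toBlocks] using heq
  | _, _, [], [], _, _ => rfl
  | _, _, [], _ :: _, hlen, _ | _, _, _ :: _, [], hlen, _
  | _, _, [_], _ :: _ :: _, hlen, _ | _, _, _ :: _ :: _, [_], hlen, _ => by simp at hlen

theorem exists_toBlocks_eq : ∀ {c h : ℕ} {l : List (ℕ × ℕ)}, l ≠ [] →
    h + (l.map Prod.fst).sum = (l.map Prod.snd).sum →
    IsChain (fun x y => (d : ℤ) ≤ y - x) ((h + c - d : ℤ) :: blockValleys h l) →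
    ∃ ws, Odd ws.length ∧ toBlocks d c h ws = l
  | _, _, [], hl, _, _ => absurd rfl hl
  | _, _, [(a, b)], _, hsum, _ => ⟨[a], by simp, by simp at hsum; simp [toBlocks, hsum]⟩
  | c, h, (a, b) :: (a', b') :: l, _, hsum, hchain => by
    rw [blockValleys, isChain_cons_cons] at hchain
    obtain ⟨hfirst, hrest⟩ := hchain
    have hvalley : (h : ℤ) + a - b = (h + c + (a - b - c) : ℕ) := by push_cast; omega
    rw [hvalley] at hrest
    obtain ⟨r, hr, hrl⟩ := exists_toBlocks_eq (c := d) (h := h + c + (a - b - c))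
      (l := (a', b') :: l) (cons_ne_nil _ _)
      (by simp only [map_cons, sum_cons] at hsum ⊢; omega) (by simpa using hrest)
    refine ⟨(a - b - c) :: b :: r, by simpa [parity_simps] using hr, ?_⟩
    rw [toBlocks, hrl, show c + (a - b - c) + b = a by omega]

end ToBlocks

theorem setOf_dDyck_peaks_eq_image (d n k : ℕ) (hk : 1 ≤ k) :
    {p : List Bool | IsDyck p ∧ semilength p = n ∧ RestrictedD d p ∧ peaks p = k} =
      (fun ws => ofBlocks (toBlocks d 0 0 ws)) ''
        {ws | ws.length = 2 * k - 1 ∧ ws.sum + (k + d * (k - 2)) = n} := by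
  ext p
  constructor
  · rintro ⟨hdyck, hn, hd, hk'⟩
    obtain ⟨l, rfl⟩ := exists_eq_ofBlocks_of_isDyck hdyck
    rw [isDyck_ofBlocks_iff] at hdyck
    rw [restrictedD_ofBlocks_iff] at hd
    rw [peaks_ofBlocks] at hk'
    rw [semilength, count_true_ofBlocks] at hn
    have hchain : IsChain (fun x y => (d : ℤ) ≤ y - x)
        ((((0 : ℕ) : ℤ) + (0 : ℕ) - d) :: blockValleys ((0 : ℕ) : ℤ) l) := by
      refine isChain_cons.2 ⟨fun y hy => ?_, by simpa using hd⟩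
      have := hdyck.2 y (blockValleys_subset_blockHeights l 0 (mem_of_mem_head? hy))
      simp only [Nat.cast_zero, zero_add]
      omega
    obtain ⟨ws, hodd, rfl⟩ := exists_toBlocks_eq d (l := l) (ne_nil_of_length_pos (by omega))
      (by simpa using hdyck.1) hchain
    rw [length_toBlocks d 0 0 ws hodd] at hk' hn
    rw [sum_fst_toBlocks_zero] at hn
    have := Nat.odd_iff.1 hodd
    refine ⟨ws, ⟨by omega, ?_⟩, rfl⟩
    rw [← hk', show ws.length / 2 + 1 - 2 = ws.length / 2 - 1 by omega]
    omega
  · rintro ⟨ws, ⟨hlen, hsum⟩, rfl⟩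
    have hodd : Odd ws.length := ⟨k - 1, by omega⟩
    refine ⟨(isDyck_ofBlocks_iff _).2 ⟨by simpa using add_sum_fst_toBlocks d 0 0 ws hodd,
      forall_blockHeights_toBlocks_nonneg d 0 0 ws⟩, ?_, ?_, ?_⟩
    · rw [semilength, count_true_ofBlocks, sum_fst_toBlocks_zero, length_toBlocks d 0 0 ws hodd,
        show ws.length / 2 = k - 1 by omega, show k - 1 - 1 = k - 2 by omega]
      omega
    · exact (restrictedD_ofBlocks_iff _ _).2
        (by simpa using (isChain_blockValleys_toBlocks d 0 0 ws).tail)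
    · rw [peaks_ofBlocks, length_toBlocks d 0 0 ws hodd]
      omega

end DyckPath

open DyckPath

/-- For `d ≥ 0`, the number of `d`-Dyck paths of semi-length `n` with exactly `k`
peaks is `C(n + k - d(k-2) - 2, 2(k-1))`. -/
theorem peak_count_formula (d : ℕ) (n k : ℕ) (hn : 1 ≤ n) (hk : 1 ≤ k) :
    peakCount (d : ℤ) n k =
      (((n : ℤ) + (k : ℤ) - (d : ℤ) * ((k : ℤ) - 2) - 2).toNat).choose (2 * (k - 1)) := by
  rw [peakCount, setOf_dDyck_peaks_eq_image d n k hk,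
    Set.InjOn.ncard_image fun w₁ h₁ w₂ h₂ heq =>
      toBlocks_inj d (h₁.1.trans h₂.1.symm) (ofBlocks_injective heq),
    show 2 * k - 1 = 2 * (k - 1) + 1 by omega]
  obtain rfl | hk2 : k = 1 ∨ 2 ≤ k := by omega
  · rw [ncard_setOf_length_succ_sum_add _ _ _ (Or.inl (by simpa using hn))]
    simp
  · rw [ncard_setOf_length_succ_sum_add _ _ _ (Or.inr (by omega))]
    have hcast : ((d * (k - 2) : ℕ) : ℤ) = d * ((k : ℤ) - 2) := by
      push_cast [Nat.cast_sub hk2]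
      ring
    congr 1
    omega
end

section
/- The total area of all Dyck paths of semi-length n equals 4^n − binom(2n+1, n). -/
lemma foldl_add_stepVal (a : ℤ) (l : List Bool) :
    l.foldl (fun h b => h + stepVal b) a = a + l.count true - l.count false := by
  induction l generalizing a with
  | nil => simp
  | cons b l ih =>
    rw [List.foldl_cons, ih]
    cases b <;> simp [stepVal] <;> ring

lemma mem_heights {h : ℤ} {l : List Bool} :
    h ∈ heights l ↔ ∃ i ≤ l.length, h = (l.take i).count true - (l.take i).count false := by
  simp only [heights, List.mem_iff_getElem, List.getElem_scanl, foldl_add_stepVal,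
    List.length_scanl, zero_add, Nat.lt_succ_iff]
  exact exists_congr fun i => by rw [exists_prop, eq_comm]

lemma isDyck_iff_count {l : List Bool} :
    IsDyck l ↔ l.count true = l.count false ∧
      ∀ i, (l.take i).count false ≤ (l.take i).count true := by
  refine and_congr_right fun _ => ⟨fun h i => ?_, fun h x hx => ?_⟩
  · rw [List.take_eq_take_min]
    have := h _ (mem_heights.2 ⟨_, min_le_right i l.length, rfl⟩)
    omega
  · obtain ⟨i, -, rfl⟩ := mem_heights.1 hx
    have := h i
    omega

lemma scanl_stepVal_add (a c : ℤ) (l : List Bool) :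
    l.scanl (fun h b => h + stepVal b) (a + c) =
      (l.scanl (fun h b => h + stepVal b) a).map (· + c) := by
  induction l generalizing a with
  | nil => simp
  | cons b l ih => simp only [List.scanl_cons, List.map_cons, add_right_comm a c, ih]

lemma heights_cons_append_cons {P : List Bool} (hP : P.count true = P.count false)
    (Q : List Bool) :
    heights (true :: P ++ false :: Q) = 0 :: ((heights P).map (· + 1) ++ heights Q) := by
  have hshift := scanl_stepVal_add 0 1 P
  rw [zero_add] at hshift
  simp only [heights, List.cons_append, List.scanl_cons, List.scanl_append, foldl_add_stepVal, hP]
  simp only [stepVal, if_true, zero_add] at hshift ⊢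
  rw [hshift]
  simp

lemma pathArea_cons_append_cons {P : List Bool} (hP : P.count true = P.count false)
    (Q : List Bool) :
    pathArea (true :: P ++ false :: Q) = pathArea P + (P.length + 1) + pathArea Q := by
  rw [pathArea, heights_cons_append_cons hP]
  simp only [List.sum_cons, List.sum_append, List.sum_map_add, List.map_id', List.map_const',
    List.sum_replicate, heights, List.length_scanl, pathArea]
  ring

section CatalanIdentities

open Finset

lemma succ_succ_mul_catalan_succ (n : ℕ) :
    (n + 2) * catalan (n + 1) = 2 * (2 * n + 1) * catalan n := by
  refine Nat.eq_of_mul_eq_mul_left n.succ_pos ?_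
  calc (n + 1) * ((n + 2) * catalan (n + 1)) = (n + 1) * (n + 1).centralBinom := by
        rw [← succ_mul_catalan_eq_centralBinom]
    _ = (n + 1) * (2 * (2 * n + 1) * catalan n) := by
        rw [Nat.succ_mul_centralBinom_succ, ← succ_mul_catalan_eq_centralBinom]; ring

lemma catalan_succ_add_choose (n : ℕ) :
    catalan (n + 1) + (2 * n + 2).choose n = (2 * n + 2).choose (n + 1) := by
  refine Nat.eq_of_mul_eq_mul_left (n + 1).succ_pos ?_
  have hC := succ_mul_catalan_eq_centralBinom (n + 1)
  have hX := Nat.choose_succ_right_eq (2 * n + 2) n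
  rw [Nat.centralBinom, show 2 * (n + 1) = 2 * n + 2 by ring] at hC
  rw [show 2 * n + 2 - n = n + 2 by omega] at hX
  linarith

lemma four_mul_choose (n : ℕ) :
    4 * (2 * n + 1).choose n = (2 * n + 3).choose (n + 1) + catalan (n + 1) := by
  have hM : (2 * n + 2).choose (n + 1) = 2 * (2 * n + 1).choose n := by
    rw [Nat.choose_succ_succ, Nat.choose_symm_half]; ring
  have hB : (2 * n + 3).choose (n + 1) = (2 * n + 2).choose n + (2 * n + 2).choose (n + 1) :=
    Nat.choose_succ_succ _ _
  linarith [catalan_succ_add_choose n]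

lemma sum_antidiagonal_catalan_succ_mul_catalan (n : ℕ) :
    ∑ ij ∈ antidiagonal n, catalan (ij.1 + 1) * catalan ij.2 + catalan (n + 1) =
      catalan (n + 2) := by
  rw [catalan_succ' (n + 1), Nat.sum_antidiagonal_succ, catalan_zero, one_mul, add_comm]

lemma sum_antidiagonal_mul_catalan_mul_catalan (n : ℕ) :
    ∑ ij ∈ antidiagonal n, (2 * ij.1 + 1) * (catalan ij.1 * catalan ij.2) =
      (n + 1) * catalan (n + 1) := by
  have hswap : ∑ ij ∈ antidiagonal n, (2 * ij.1 + 1) * (catalan ij.1 * catalan ij.2) =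
      ∑ ij ∈ antidiagonal n, (2 * ij.2 + 1) * (catalan ij.1 * catalan ij.2) := by
    rw [← Nat.sum_antidiagonal_swap]
    exact sum_congr rfl fun ij _ => by simp only [Prod.fst_swap, Prod.snd_swap]; ring
  refine Nat.eq_of_mul_eq_mul_left two_pos ?_
  calc 2 * ∑ ij ∈ antidiagonal n, (2 * ij.1 + 1) * (catalan ij.1 * catalan ij.2)
      = ∑ ij ∈ antidiagonal n, 2 * (ij.1 + ij.2 + 1) * (catalan ij.1 * catalan ij.2) := by
        rw [two_mul]
        nth_rewrite 2 [hswap]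
        rw [← sum_add_distrib]
        exact sum_congr rfl fun ij _ => by ring
    _ = 2 * ((n + 1) * catalan (n + 1)) := by
        rw [catalan_succ' n, mul_sum, mul_sum]
        exact sum_congr rfl fun ij hij => by rw [mem_antidiagonal.1 hij]; ring

end CatalanIdentities

section AreaRecurrence

open Finset

variable (a : ℕ → ℤ) (h0 : a 0 = 0)
  (hrec : ∀ n, a (n + 1) =
    2 * ∑ ij ∈ antidiagonal n, a ij.1 * catalan ij.2 + (n + 1) * catalan (n + 1))
include h0 hrec

lemma succ_eq_four_mul_add_catalan_of_rec (n : ℕ) : a (n + 1) = 4 * a n + catalan (n + 1) := by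
  induction n using Nat.strong_induction_on with
  | _ n ih =>
  cases n with
  | zero => simp [hrec, h0, catalan_one]
  | succ k =>
    have hconv : ∑ ij ∈ antidiagonal (k + 1), a ij.1 * catalan ij.2 =
        4 * ∑ ij ∈ antidiagonal k, a ij.1 * catalan ij.2 +
          (catalan (k + 2) - catalan (k + 1)) := by
      have hcat := sum_antidiagonal_catalan_succ_mul_catalan k
      zify at hcat
      rw [Nat.sum_antidiagonal_succ, h0, zero_mul, zero_add, ← eq_sub_iff_add_eq.2 hcat, mul_sum,
        ← sum_add_distrib]
      refine sum_congr rfl fun ij hij => ?_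
      rw [ih ij.1 (by have := mem_antidiagonal.1 hij; omega)]
      ring
    have hcat := succ_succ_mul_catalan_succ (k + 1)
    zify at hcat
    rw [hrec (k + 1), hrec k, hconv]
    push_cast
    linear_combination hcat

lemma eq_four_pow_sub_choose_of_rec (n : ℕ) : a n = 4 ^ n - (2 * n + 1).choose n := by
  induction n with
  | zero => simp [h0]
  | succ n ih =>
    have hchoose := four_mul_choose n
    zify at hchoose
    rw [succ_eq_four_mul_add_catalan_of_rec a h0 hrec, ih,
      show 2 * (n + 1) + 1 = 2 * n + 3 by ring]
    linear_combination -hchoose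

end AreaRecurrence

namespace DyckStep

def toBool : DyckStep → Bool
  | U => true
  | D => false

def ofBool (b : Bool) : DyckStep := if b then U else D

lemma toBool_injective : Function.Injective toBool := by
  intro s t; cases s <;> cases t <;> simp [toBool]

@[simp] lemma toBool_ofBool (b : Bool) : (ofBool b).toBool = b := by
  cases b <;> rfl

lemma count_map_toBool_true (l : List DyckStep) : (l.map toBool).count true = l.count U :=
  List.count_map_of_injective _ _ toBool_injective U

lemma count_map_toBool_false (l : List DyckStep) : (l.map toBool).count false = l.count D :=
  List.count_map_of_injective _ _ toBool_injective D

lemma ofBool_injective : Function.Injective ofBool :=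
  Function.LeftInverse.injective toBool_ofBool

lemma count_map_ofBool_U (l : List Bool) : (l.map ofBool).count U = l.count true :=
  List.count_map_of_injective _ _ ofBool_injective true

lemma count_map_ofBool_D (l : List Bool) : (l.map ofBool).count D = l.count false :=
  List.count_map_of_injective _ _ ofBool_injective false

end DyckStep

namespace DyckWord

def toBools (p : DyckWord) : List Bool := p.toList.map DyckStep.toBool

lemma toBools_injective : Function.Injective toBools := fun _ _ h =>
  DyckWord.ext (List.map_injective_iff.2 DyckStep.toBool_injective h)

@[simp] lemma length_toBools (p : DyckWord) : p.toBools.length = 2 * p.semilength := by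
  rw [toBools, List.length_map, two_mul_semilength_eq_length]

lemma toBools_nest_add (p q : DyckWord) :
    (p.nest + q).toBools = true :: p.toBools ++ false :: q.toBools := by
  change (([DyckStep.U] ++ p.toList ++ [DyckStep.D]) ++ q.toList).map _ = _
  simp [toBools, DyckStep.toBool]

lemma isDyck_toBools (p : DyckWord) : IsDyck p.toBools := by
  simp only [isDyck_iff_count, toBools, ← List.map_take, DyckStep.count_map_toBool_true,
    DyckStep.count_map_toBool_false]
  exact ⟨p.count_U_eq_count_D, p.count_D_le_count_U⟩

lemma exists_toBools_eq_of_isDyck {l : List Bool} (hl : IsDyck l) :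
    ∃ p : DyckWord, p.toBools = l := by
  rw [isDyck_iff_count] at hl
  refine ⟨⟨l.map DyckStep.ofBool, ?_, fun i => ?_⟩, ?_⟩
  · rw [DyckStep.count_map_ofBool_U, DyckStep.count_map_ofBool_D]
    exact hl.1
  · rw [← List.map_take, DyckStep.count_map_ofBool_U, DyckStep.count_map_ofBool_D]
    exact hl.2 i
  · simp [toBools, Function.comp_def]

end DyckWord

namespace BinaryTree

open Finset

def dyckArea (t : BinaryTree Unit) : ℤ := pathArea (DyckWord.ofTree t).toBools

lemma semilength_ofTree (t : BinaryTree Unit) : (DyckWord.ofTree t).semilength = t.numNodes := by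
  rw [← DyckWord.numNodes_toTree, DyckWord.toTree_ofTree]

lemma dyckArea_node (l r : BinaryTree Unit) :
    dyckArea (l △ r) = dyckArea l + (2 * l.numNodes + 1) + dyckArea r := by
  rw [dyckArea, DyckWord.ofTree, DyckWord.toBools_nest_add,
    pathArea_cons_append_cons (DyckWord.isDyck_toBools _).1, DyckWord.length_toBools,
    semilength_ofTree]
  push_cast
  rfl

lemma sum_treesOfNumNodesEq_succ {M : Type*} [AddCommMonoid M] (g : BinaryTree Unit → M)
    (n : ℕ) :
    ∑ t ∈ treesOfNumNodesEq (n + 1), g t =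
      ∑ ij ∈ antidiagonal n, ∑ l ∈ treesOfNumNodesEq ij.1, ∑ r ∈ treesOfNumNodesEq ij.2,
        g (l △ r) := by
  rw [treesOfNumNodesEq_succ, sum_biUnion]
  · exact sum_congr rfl fun ij _ => by rw [sum_map, sum_product]; rfl
  · simp_rw [Set.PairwiseDisjoint, Set.Pairwise, disjoint_left]
    aesop

def totalDyckArea (n : ℕ) : ℤ := ∑ t ∈ treesOfNumNodesEq n, dyckArea t

lemma totalDyckArea_succ (n : ℕ) :
    totalDyckArea (n + 1) = ∑ ij ∈ antidiagonal n,
      (totalDyckArea ij.1 * catalan ij.2 + (2 * ij.1 + 1) * (catalan ij.1 * catalan ij.2) +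
        catalan ij.1 * totalDyckArea ij.2) := by
  rw [totalDyckArea, sum_treesOfNumNodesEq_succ]
  refine sum_congr rfl fun ij _ => ?_
  have hnodes : ∀ l ∈ treesOfNumNodesEq ij.1,
      ∑ r ∈ treesOfNumNodesEq ij.2, dyckArea (l △ r) =
        ∑ r ∈ treesOfNumNodesEq ij.2, (dyckArea l + (2 * ij.1 + 1) + dyckArea r) := by
    intro l hl
    simp only [dyckArea_node, mem_treesOfNumNodesEq.1 hl]
  simp only [sum_congr rfl hnodes, sum_add_distrib, sum_const, treesOfNumNodesEq_card_eq_catalan,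
    nsmul_eq_mul, totalDyckArea, ← mul_sum]
  ring

lemma totalDyckArea_eq (n : ℕ) : totalDyckArea n = 4 ^ n - (2 * n + 1).choose n := by
  refine eq_four_pow_sub_choose_of_rec totalDyckArea (by simp [totalDyckArea]; rfl)
    (fun n => ?_) n
  have hswap : ∑ ij ∈ antidiagonal n, (catalan ij.1 : ℤ) * totalDyckArea ij.2 =
      ∑ ij ∈ antidiagonal n, totalDyckArea ij.1 * catalan ij.2 := by
    rw [← Nat.sum_antidiagonal_swap]
    exact sum_congr rfl fun ij _ => mul_comm _ _
  have hcat := sum_antidiagonal_mul_catalan_mul_catalan n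
  zify at hcat
  rw [totalDyckArea_succ, sum_add_distrib, sum_add_distrib, hswap, hcat]
  ring

end BinaryTree

lemma List.ofFn_getD_of_length_eq {α : Type*} {l : List α} {n : ℕ} (h : l.length = n) (d : α) :
    List.ofFn (fun i : Fin n => l.getD i d) = l := by
  subst h
  exact List.ext_getElem (by simp) fun i _ _ => by simp

open BinaryTree DyckWord Finset in
lemma sum_treesOfNumNodesEq_eq_sum_isDyck {M : Type*} [AddCommMonoid M] (g : List Bool → M)
    (n : ℕ) [DecidablePred fun f : Fin (2 * n) → Bool => IsDyck (List.ofFn f)] :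
    ∑ t ∈ treesOfNumNodesEq n, g (ofTree t).toBools =
      ∑ f ∈ univ.filter (fun f : Fin (2 * n) → Bool => IsDyck (List.ofFn f)),
        g (List.ofFn f) := by
  have hofFn (t) (ht : t ∈ treesOfNumNodesEq n) :
      List.ofFn (fun k : Fin (2 * n) => (ofTree t).toBools.getD k false) = (ofTree t).toBools :=
    List.ofFn_getD_of_length_eq
      (by rw [length_toBools, semilength_ofTree, mem_treesOfNumNodesEq.1 ht]) false
  refine sum_bij (fun t _ k => (ofTree t).toBools.getD k false) (fun t ht => ?_)
    (fun t ht u hu htu => ?_) (fun f hf => ?_) (fun t ht => by rw [hofFn t ht])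
  · rw [mem_filter, hofFn t ht]
    exact ⟨mem_univ _, isDyck_toBools _⟩
  · have := congrArg List.ofFn htu
    rw [hofFn t ht, hofFn u hu] at this
    exact equivTree.symm.injective (toBools_injective this)
  · obtain ⟨p, hp⟩ := exists_toBools_eq_of_isDyck (mem_filter.1 hf).2
    have hlen := congrArg List.length hp
    rw [length_toBools, List.length_ofFn] at hlen
    have hmem : p.toTree ∈ treesOfNumNodesEq n := by
      rw [mem_treesOfNumNodesEq, numNodes_toTree]; omega
    refine ⟨p.toTree, hmem, List.ofFn_injective ?_⟩
    rw [hofFn _ hmem, ofTree_toTree, hp]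

open scoped Classical

/-- The total area of all Dyck paths of semi-length `n` is `4^n - C(2n+1, n)`. -/
theorem total_area_dyck (n : ℕ) :
    ∑ f ∈ Finset.univ.filter (fun f : Fin (2 * n) → Bool => IsDyck (List.ofFn f)),
        pathArea (List.ofFn f) =
      4 ^ n - ((2 * n + 1).choose n : ℤ) := by
  calc _ = BinaryTree.totalDyckArea n := (sum_treesOfNumNodesEq_eq_sum_isDyck pathArea n).symm
    _ = _ := BinaryTree.totalDyckArea_eq n
end
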